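/- The sequence $\left(\left(\frac{\Gamma\left(\frac{3m+2}{2m+4}\right)}{\Gamma\left(\frac{3}{2}\right)}\right)^{-(m+2)/2}\right)_{m=1}^{\infty}$ is increasing in $m$. -/
import Mathlib


open Real

theorem gamma_ratio_seq_increasing :
    Monotone (fun m : ℕ =>
      (Real.Gamma ((3 * (m + 1 : ℝ) + 2) / (2 * (m + 1 : ℝ) + 4)) / Real.Gamma (3 / 2))
        ^ (-(((m + 1 : ℝ) + 2) / 2))) := by
  have hxpos : ∀ m : ℕ, (0:ℝ) < (3 * (m + 1 : ℝ) + 2) / (2 * (m + 1 : ℝ) + 4) := by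
    intro m
    have hm : (0:ℝ) ≤ (m:ℝ) := Nat.cast_nonneg m
    apply div_pos <;> linarith
  have hxlt : ∀ m : ℕ, (3 * (m + 1 : ℝ) + 2) / (2 * (m + 1 : ℝ) + 4) < 3/2 := by
    intro m
    have hm : (0:ℝ) ≤ (m:ℝ) := Nat.cast_nonneg m
    rw [div_lt_iff₀ (by linarith)]
    linarith
  have key : ∀ m : ℕ,
      (Real.Gamma ((3 * (m + 1 : ℝ) + 2) / (2 * (m + 1 : ℝ) + 4)) / Real.Gamma (3 / 2))
        ^ (-(((m + 1 : ℝ) + 2) / 2))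
      = Real.exp (((Real.log ∘ Real.Gamma) ((3 * (m + 1 : ℝ) + 2) / (2 * (m + 1 : ℝ) + 4))
          - (Real.log ∘ Real.Gamma) (3/2))
          / ((3 * (m + 1 : ℝ) + 2) / (2 * (m + 1 : ℝ) + 4) - 3/2)) := by
    intro m
    have hm : (0:ℝ) ≤ (m:ℝ) := Nat.cast_nonneg m
    have hgx := Real.Gamma_pos_of_pos (hxpos m)
    have hg32 := Real.Gamma_pos_of_pos (by norm_num : (0:ℝ) < 3/2)
    rw [Real.rpow_def_of_pos (div_pos hgx hg32), Real.log_div hgx.ne' hg32.ne']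
    congr 1
    have hsub : (3 * (m + 1 : ℝ) + 2) / (2 * (m + 1 : ℝ) + 4) - 3/2
        = -(2 / ((m:ℝ) + 3)) := by
      field_simp
      ring
    rw [hsub]
    simp only [Function.comp_apply]
    have h3 : ((m:ℝ) + 3) ≠ 0 := by linarith
    field_simp
    ring
  intro a b hab
  simp only
  rw [key a, key b, Real.exp_le_exp]
  have ha0 : (0:ℝ) ≤ (a:ℝ) := Nat.cast_nonneg a
  have hb0 : (0:ℝ) ≤ (b:ℝ) := Nat.cast_nonneg b
  have hab' : (a:ℝ) ≤ (b:ℝ) := Nat.cast_le.2 hab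
  apply Real.convexOn_log_Gamma.secant_mono
  · exact Set.mem_Ioi.2 (by norm_num)
  · exact Set.mem_Ioi.2 (hxpos a)
  · exact Set.mem_Ioi.2 (hxpos b)
  · exact ne_of_lt (hxlt a)
  · exact ne_of_lt (hxlt b)
  · rw [div_le_div_iff₀ (by linarith) (by linarith)]
    nlinarith
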